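/- arXiv:2108.12588 — 9 statements merged into one kernel-verified Lean document; each statement's English description precedes it below -/
import Mathlib

section
/- For a semigroup S, the following are equivalent: (i) S is left simple and contains an idempotent; (ii) S is left simple and right cancellative; (iii) for all a, b ∈ S the equation xa = b has a unique solution x ∈ S. -/
/-- `I` is a left ideal of the semigroup `S`. -/
def IsLeftIdeal {S : Type*} [Semigroup S] (I : Set S) : Prop :=
  I.Nonempty ∧ ∀ s : S, ∀ i ∈ I, s * i ∈ I

/-- `S` is left simple: its only left ideal is `S` itself. -/
def LeftSimple (S : Type*) [Semigroup S] : Prop :=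
  ∀ I : Set S, IsLeftIdeal I → I = Set.univ

lemma ls_solve {S : Type*} [Semigroup S] (h : LeftSimple S) (a b : S) :
    ∃ x : S, x * a = b := by
  have hI : IsLeftIdeal (Set.range (· * a)) := by
    refine ⟨⟨a * a, a, rfl⟩, ?_⟩
    rintro s i ⟨x, rfl⟩
    exact ⟨s * x, by simp [mul_assoc]⟩
  have := h _ hI
  have : b ∈ Set.range (· * a) := this ▸ Set.mem_univ b
  exact this

lemma idem_right_id {S : Type*} [Semigroup S] (h : LeftSimple S) {f : S}
    (hf : f * f = f) (b : S) : b * f = b := by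
  obtain ⟨z, hz⟩ := ls_solve h f b
  rw [← hz, mul_assoc, hf]

/-- For a semigroup `S`, the following are equivalent:
(i) `S` is left simple and contains an idempotent;
(ii) `S` is left simple and right cancellative;
(iii) for all `a b ∈ S` the equation `x * a = b` has a unique solution. -/
theorem stmt4 {S : Type*} [Semigroup S] [Nonempty S] :
    [LeftSimple S ∧ ∃ e : S, e * e = e,
     LeftSimple S ∧ ∀ a x y : S, x * a = y * a → x = y,
     ∀ a b : S, ∃! x : S, x * a = b].TFAE := by
  tfae_have 1 → 2 := by
    rintro ⟨h, e, he⟩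
    refine ⟨h, fun a x y hxy => ?_⟩
    obtain ⟨a', ha'⟩ := ls_solve h a e
    have hre : ∀ b : S, b * e = b := idem_right_id h he
    have hf : (a * a') * (a * a') = a * a' := by
      rw [mul_assoc, ← mul_assoc a' a, ha', ← mul_assoc, hre]
    have hx := idem_right_id h hf x
    have hy := idem_right_id h hf y
    rw [← hx, ← hy, ← mul_assoc, ← mul_assoc, hxy]
  tfae_have 2 → 3 := by
    rintro ⟨h, hc⟩ a b
    obtain ⟨x, hx⟩ := ls_solve h a b
    exact ⟨x, hx, fun y hy => hc a y x (hy.trans hx.symm)⟩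
  tfae_have 3 → 1 := by
    intro h
    have hls : LeftSimple S := by
      intro I ⟨⟨i, hi⟩, hcl⟩
      ext b
      simp only [Set.mem_univ, iff_true]
      obtain ⟨x, hx, -⟩ := h i b
      exact hx ▸ hcl x i hi
    obtain ⟨a⟩ := ‹Nonempty S›
    obtain ⟨e, he, hu⟩ := h a a
    exact ⟨hls, e, hu (e * e) (by show e * e * a = a; rw [mul_assoc, he, he])⟩
  tfae_finish
end

section
/- Let S be a completely simple semigroup with primitive idempotent e. Then G := eSe is a group with identity e. -/
/-- `I` is a two-sided ideal of the semigroup `S`. -/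
def IsIdeal {S : Type*} [Semigroup S] (I : Set S) : Prop :=
  I.Nonempty ∧ ∀ s : S, ∀ i ∈ I, s * i ∈ I ∧ i * s ∈ I

lemma principal_ideal {S : Type*} [Semigroup S] (a : S) :
    IsIdeal {z : S | z = a ∨ (∃ s, z = a * s) ∨ (∃ s, z = s * a) ∨ ∃ s t, z = s * a * t} := by
  constructor
  · exact ⟨a, Or.inl rfl⟩
  · rintro s i (rfl | ⟨t, rfl⟩ | ⟨t, rfl⟩ | ⟨t, u, rfl⟩)
    · exact ⟨Or.inr (Or.inr (Or.inl ⟨s, rfl⟩)), Or.inr (Or.inl ⟨s, rfl⟩)⟩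
    · exact ⟨Or.inr (Or.inr (Or.inr ⟨s, t, by simp [mul_assoc]⟩)),
        Or.inr (Or.inl ⟨t * s, by simp [mul_assoc]⟩)⟩
    · exact ⟨Or.inr (Or.inr (Or.inl ⟨s * t, by simp [mul_assoc]⟩)),
        Or.inr (Or.inr (Or.inr ⟨t, s, by simp [mul_assoc]⟩))⟩
    · exact ⟨Or.inr (Or.inr (Or.inr ⟨s * t, u, by simp [mul_assoc]⟩)),
        Or.inr (Or.inr (Or.inr ⟨t, u * s, by simp [mul_assoc]⟩))⟩

/-- If `S` is a completely simple semigroup with primitive idempotent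
`e`, then `G = eSe` is a group with identity `e`. -/
theorem stmt5 {S : Type*} [Semigroup S]
    (hsimple : ∀ I : Set S, IsIdeal I → I = Set.univ)
    (e : S) (he : e * e = e)
    (hprim : ∀ x : S, x * x = x → e * x = x → x * e = x → x = e) :
    e ∈ {z : S | ∃ x : S, z = e * x * e} ∧
    (∀ g ∈ {z : S | ∃ x : S, z = e * x * e}, ∀ h ∈ {z : S | ∃ x : S, z = e * x * e},
      g * h ∈ {z : S | ∃ x : S, z = e * x * e}) ∧
    (∀ g ∈ {z : S | ∃ x : S, z = e * x * e}, e * g = g ∧ g * e = g) ∧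
    (∀ g ∈ {z : S | ∃ x : S, z = e * x * e},
      ∃ h ∈ {z : S | ∃ x : S, z = e * x * e}, g * h = e ∧ h * g = e) := by
  -- basic facts about elements of eSe
  have hid : ∀ g : S, (∃ x : S, g = e * x * e) → e * g = g ∧ g * e = g := by
    rintro g ⟨x, rfl⟩
    constructor
    · rw [← mul_assoc, ← mul_assoc, he]
    · rw [mul_assoc, he]
  refine ⟨⟨e, by rw [he, he]⟩, ?_, ?_, ?_⟩
  · rintro g ⟨x, rfl⟩ h ⟨y, rfl⟩
    exact ⟨x * e * (e * y), by simp only [mul_assoc]⟩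
  · exact fun g hg => hid g hg
  · rintro g hg
    obtain ⟨hge, heg⟩ := hid g hg
    -- simplicity: e lies in the principal ideal of g
    have hI := hsimple _ (principal_ideal g)
    have heI : e ∈ {z : S | z = g ∨ (∃ s, z = g * s) ∨ (∃ s, z = s * g) ∨
        ∃ s t, z = s * g * t} := hI ▸ Set.mem_univ e
    -- extract u v ∈ eSe  with u * g * v = e
    have key : ∃ u v : S, (∃ x, u = e * x * e) ∧ (∃ y, v = e * y * e) ∧ u * g * v = e := by
      rcases heI with h1 | ⟨s, h1⟩ | ⟨s, h1⟩ | ⟨s, t, h1⟩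
      · exact ⟨e, e, ⟨e, by rw [he, he]⟩, ⟨e, by rw [he, he]⟩,
          by rw [mul_assoc, heg, hge, ← h1]⟩
      · refine ⟨e, e * s * e, ⟨e, by rw [he, he]⟩, ⟨s, rfl⟩, ?_⟩
        calc e * g * (e * s * e) = g * (e * (s * e)) := by rw [hge, mul_assoc]
          _ = g * e * s * e := by simp only [mul_assoc]
          _ = g * s * e := by rw [heg]
          _ = e * e := by rw [← h1]
          _ = e := he
      · refine ⟨e * s * e, e, ⟨s, rfl⟩, ⟨e, by rw [he, he]⟩, ?_⟩
        calc e * s * e * g * e = e * s * (e * g * e) := by simp only [mul_assoc]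
          _ = e * s * (g * e) := by rw [hge]
          _ = e * (s * g) * e := by simp only [mul_assoc]
          _ = e * e * e := by rw [← h1]
          _ = e := by rw [he, he]
      · refine ⟨e * s * e, e * t * e, ⟨s, rfl⟩, ⟨t, rfl⟩, ?_⟩
        calc e * s * e * g * (e * t * e)
            = e * (s * (e * g * (e * (t * e)))) := by simp only [mul_assoc]
          _ = e * (s * (g * (e * (t * e)))) := by rw [hge]
          _ = e * (s * (g * e * (t * e))) := by rw [← mul_assoc g e]
          _ = e * (s * (g * (t * e))) := by rw [heg]
          _ = e * (s * g * t) * e := by simp only [mul_assoc]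
          _ = e * e * e := by rw [← h1]
          _ = e := by rw [he, he]
    obtain ⟨u, v, hu, hv, huv⟩ := key
    obtain ⟨hue, heu⟩ := hid u hu
    obtain ⟨hve, hev⟩ := hid v hv
    -- h := v * u is the inverse
    refine ⟨v * u, ?_, ?_, ?_⟩
    · obtain ⟨x, hx⟩ := hv
      obtain ⟨y, hy⟩ := hu
      exact ⟨x * e * (e * y), by rw [hx, hy]; simp only [mul_assoc]⟩
    · -- g * (v * u) is idempotent in eSe, hence = e
      have h1 : (g * (v * u)) * (g * (v * u)) = g * (v * u) := by
        calc (g * (v * u)) * (g * (v * u)) = g * v * (u * g * v) * u := by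
              simp only [mul_assoc]
          _ = g * v * e * u := by rw [huv]
          _ = g * (v * u) := by rw [mul_assoc g v e, hev, mul_assoc]
      have h2 : e * (g * (v * u)) = g * (v * u) := by rw [← mul_assoc, hge]
      have h3 : (g * (v * u)) * e = g * (v * u) := by rw [mul_assoc, mul_assoc, heu]
      have := hprim _ h1 h2 h3
      rw [← mul_assoc] at this ⊢
      exact this
    · have h1 : (v * u * g) * (v * u * g) = v * u * g := by
        calc (v * u * g) * (v * u * g) = v * (u * g * v) * (u * g) := by
              simp only [mul_assoc]
          _ = v * e * (u * g) := by rw [huv]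
          _ = v * u * g := by rw [hev, ← mul_assoc]
      have h2 : e * (v * u * g) = v * u * g := by
        rw [← mul_assoc, ← mul_assoc, hve]
      have h3 : (v * u * g) * e = v * u * g := by rw [mul_assoc, mul_assoc, heg, ← mul_assoc]
      exact hprim _ h1 h2 h3
end

section
/- Let S be a completely simple semigroup with primitive idempotent e. Then Se is a left group, i.e. Se is left simple and contains an idempotent; moreover Se is a minimal left ideal of S. -/
lemma stmt6_SaS {S : Type*} [Semigroup S]
    (hsimple : ∀ I : Set S, IsIdeal I → I = Set.univ) (a b : S) :
    ∃ x y : S, b = x * a * y := by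
  have h : IsIdeal {z : S | ∃ x y : S, z = x * a * y} := by
    refine ⟨⟨a * a * a, a, a, rfl⟩, ?_⟩
    rintro s i ⟨x, y, rfl⟩
    exact ⟨⟨s * x, y, by simp [mul_assoc]⟩, ⟨x, y * s, by simp [mul_assoc]⟩⟩
  have hb : b ∈ {z : S | ∃ x y : S, z = x * a * y} := hsimple _ h ▸ Set.mem_univ b
  exact hb

lemma stmt6_key {S : Type*} [Semigroup S]
    (hsimple : ∀ I : Set S, IsIdeal I → I = Set.univ)
    (e : S) (he : e * e = e)
    (hprim : ∀ x : S, x * x = x → e * x = x → x * e = x → x = e)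
    (a : S) (ha : a * e = a) :
    ∃ s : S, s * e = s ∧ s * a = e := by
  obtain ⟨t, ht⟩ : ∃ t : S, t = e * a := ⟨_, rfl⟩
  have het : e * t = t := by rw [ht, ← mul_assoc, he]
  have hte : t * e = t := by rw [ht, mul_assoc, ha]
  obtain ⟨x, y, hxy⟩ := stmt6_SaS hsimple t e
  obtain ⟨u, hu⟩ : ∃ u : S, u = e * x * e := ⟨_, rfl⟩
  obtain ⟨v, hv⟩ : ∃ v : S, v = e * y * e := ⟨_, rfl⟩
  have heu : e * u = u := by rw [hu, ← mul_assoc, ← mul_assoc, he]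
  have hue : u * e = u := by rw [hu, mul_assoc, mul_assoc, he, ← mul_assoc]
  have hev : e * v = v := by rw [hv, ← mul_assoc, ← mul_assoc, he]
  have hve : v * e = v := by rw [hv, mul_assoc, mul_assoc, he, ← mul_assoc]
  have hutv : u * t * v = e := by
    have h1 : u * t = e * x * t := by
      rw [hu, mul_assoc (e * x) e t, het]
    have h2 : t * v = t * y * e := by
      rw [hv, ← mul_assoc, ← mul_assoc, hte]
    calc u * t * v = e * x * (t * v) := by rw [h1, mul_assoc]
      _ = e * x * (t * y * e) := by rw [h2]
      _ = e * (x * (t * y)) * e := by simp [mul_assoc]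
      _ = e * (x * t * y) * e := by rw [mul_assoc x t y]
      _ = e := by rw [← hxy, he, he]
  have htvu : t * v * u = e := by
    obtain ⟨f, hf⟩ : ∃ f : S, f = t * v * u := ⟨_, rfl⟩
    have hff : f * f = f := by
      calc f * f = t * v * (u * t * v) * u := by simp [hf, mul_assoc]
        _ = t * v * e * u := by rw [hutv]
        _ = f := by rw [hf, mul_assoc (t * v) e u, heu]
    have hef : e * f = f := by
      rw [hf, ← mul_assoc, ← mul_assoc, het]
    have hfe : f * e = f := by
      rw [hf, mul_assoc, hue]
    rw [← hf, hprim f hff hef hfe]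
  have hvut : v * u * t = e := by
    obtain ⟨g, hg⟩ : ∃ g : S, g = v * u * t := ⟨_, rfl⟩
    have hgg : g * g = g := by
      calc g * g = v * u * (t * v * u) * t := by simp [hg, mul_assoc]
        _ = v * u * e * t := by rw [htvu]
        _ = g := by rw [hg, mul_assoc (v * u) e t, het]
    have heg : e * g = g := by
      rw [hg, ← mul_assoc, ← mul_assoc, hev]
    have hge : g * e = g := by
      rw [hg, mul_assoc, hte]
    rw [← hg, hprim g hgg heg hge]
  refine ⟨v * u * e, ?_, ?_⟩
  · rw [mul_assoc, he]
  · calc v * u * e * a = v * u * (e * a) := by rw [mul_assoc]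
      _ = e := by rw [← ht, hvut]

/-- If `S` is completely simple with primitive idempotent `e`, then
`Se` is a left group (left simple as a semigroup in its own right and containing an
idempotent), and `Se` is a minimal left ideal of `S`. -/
theorem stmt6 {S : Type*} [Semigroup S]
    (hsimple : ∀ I : Set S, IsIdeal I → I = Set.univ)
    (e : S) (he : e * e = e)
    (hprim : ∀ x : S, x * x = x → e * x = x → x * e = x → x = e) :
    (∀ I : Set S, I ⊆ {z : S | ∃ x : S, z = x * e} → I.Nonempty →
        (∀ a ∈ {z : S | ∃ x : S, z = x * e}, ∀ i ∈ I, a * i ∈ I) →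
        I = {z : S | ∃ x : S, z = x * e}) ∧
    (∃ f ∈ {z : S | ∃ x : S, z = x * e}, f * f = f) ∧
    (IsLeftIdeal {z : S | ∃ x : S, z = x * e} ∧
      ∀ I : Set S, IsLeftIdeal I → I ⊆ {z : S | ∃ x : S, z = x * e} →
        I = {z : S | ∃ x : S, z = x * e}) := by
  obtain ⟨hkey⟩ : Nonempty (∀ a : S, a * e = a → ∃ s : S, s * e = s ∧ s * a = e) :=
    ⟨fun a ha => stmt6_key hsimple e he hprim a ha⟩
  have hmem_e : e ∈ {z : S | ∃ x : S, z = x * e} := ⟨e, he.symm⟩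
  have hre : ∀ x : S, (x * e) * e = x * e := fun x => by rw [mul_assoc, he]
  refine ⟨?_, ⟨e, hmem_e, he⟩, ⟨⟨e, hmem_e⟩, fun s i ⟨x, hx⟩ =>
    ⟨s * x, by rw [hx, mul_assoc]⟩⟩, ?_⟩
  · -- left simplicity of Se
    intro I hIsub hIne hIcl
    obtain ⟨a, haI⟩ := hIne
    obtain ⟨w, hw⟩ := hIsub haI
    have ha : a * e = a := by rw [hw]; exact hre w
    obtain ⟨s, hse, hsa⟩ := hkey a ha
    have heI : e ∈ I := by
      have := hIcl s ⟨s, hse.symm⟩ a haI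
      rwa [hsa] at this
    apply Set.Subset.antisymm hIsub
    rintro z ⟨x, rfl⟩
    have := hIcl (x * e) ⟨x, rfl⟩ e heI
    rwa [hre x] at this
  · -- minimality of Se as a left ideal
    intro I ⟨hne, hcl⟩ hIsub
    obtain ⟨a, haI⟩ := hne
    obtain ⟨w, hw⟩ := hIsub haI
    have ha : a * e = a := by rw [hw]; exact hre w
    obtain ⟨s, hse, hsa⟩ := hkey a ha
    have heI : e ∈ I := by have := hcl s a haI; rwa [hsa] at this
    apply Set.Subset.antisymm hIsub
    rintro z ⟨x, rfl⟩
    exact hcl x e heI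
end

section
/- Let S be a completely simple semigroup with primitive idempotent e, and set L = E(Se), G = eSe, R = E(eS). Then S = LGR and the product map ψ : L × G × R → S, ψ(x,g,y) = xgy, is a bijection with inverse z ↦ (ze(eze)⁻¹, eze, (eze)⁻¹ez), where inverses are taken in the group G. -/
/-- Rees decomposition. Let `S` be completely simple with primitive
idempotent `e`, `L = E(Se)`, `G = eSe`, `R = E(eS)`, and let `inv` be the inversion
of the group `G` (identity `e`). Then every `z ∈ S` factors as `z = x * g * y` with
`(x, g, y) ∈ L × G × R`, and the factorization is given by the explicit inverse map
`z ↦ (z*e*(e*z*e)⁻¹, e*z*e, (e*z*e)⁻¹*(e*z))`; in particular the product map is a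
bijection from `L × G × R` onto `S`. -/
theorem stmt7 {S : Type*} [Semigroup S]
    (hsimple : ∀ I : Set S, IsIdeal I → I = Set.univ)
    (e : S) (he : e * e = e)
    (hprim : ∀ x : S, x * x = x → e * x = x → x * e = x → x = e)
    (L : Set S) (hL : L = {z : S | (∃ x : S, z = x * e) ∧ z * z = z})
    (G : Set S) (hG : G = {z : S | ∃ x : S, z = e * x * e})
    (R : Set S) (hR : R = {z : S | (∃ x : S, z = e * x) ∧ z * z = z})
    (inv : S → S)
    (hinv : ∀ g ∈ G, inv g ∈ G ∧ g * inv g = e ∧ inv g * g = e) :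
    (∀ z : S, ∃ x ∈ L, ∃ g ∈ G, ∃ y ∈ R, z = x * g * y) ∧
    (∀ x ∈ L, ∀ g ∈ G, ∀ y ∈ R,
      x = (x * g * y) * e * inv (e * (x * g * y) * e) ∧
      g = e * (x * g * y) * e ∧
      y = inv (e * (x * g * y) * e) * (e * (x * g * y))) := by
  subst hL hG hR
  have hee : ∀ t : S, e * (e * t) = e * t := fun t => by rw [← mul_assoc, he]
  constructor
  · -- Part 1: decomposition
    intro z
    -- S e S = S
    have hideal : IsIdeal {s : S | ∃ a b : S, s = a * e * b} := by
      constructor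
      · exact ⟨e, e, e, by rw [he, he]⟩
      · rintro s i ⟨a, b, rfl⟩
        exact ⟨⟨s * a, b, by simp only [mul_assoc]⟩, ⟨a, b * s, by simp only [mul_assoc]⟩⟩
    have hzm : ∃ a b : S, z = a * e * b := by
      have h := hsimple _ hideal
      rw [Set.eq_univ_iff_forall] at h
      exact h z
    obtain ⟨a, b, hz⟩ := hzm
    obtain ⟨⟨w, hw⟩, hgu, hug⟩ := hinv (e * z * e) ⟨z, rfl⟩
    set u := inv (e * z * e) with hu
    have heu : e * u = u := by rw [hw]; simp only [← mul_assoc, he]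
    have hue : u * e = u := by rw [hw]; simp only [mul_assoc, he]
    have hpqg : (e * a * e) * (e * b * e) = e * z * e := by
      rw [hz]; simp only [mul_assoc]; rw [hee]
    obtain ⟨_, hpip, hipp⟩ := hinv (e * a * e) ⟨a, rfl⟩
    set ip := inv (e * a * e) with hip
    have hqup : (e * b * e) * (u * (e * a * e)) = e := by
      have h1 : (e * a * e) * ((e * b * e) * (u * (e * a * e))) = e * a * e := by
        calc (e * a * e) * ((e * b * e) * (u * (e * a * e)))
            = ((e * a * e) * (e * b * e)) * (u * (e * a * e)) := by simp only [mul_assoc]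
          _ = (e * z * e) * (u * (e * a * e)) := by rw [hpqg]
          _ = ((e * z * e) * u) * (e * a * e) := by simp only [mul_assoc]
          _ = e * (e * a * e) := by rw [hgu]
          _ = e * a * e := by simp only [← mul_assoc, he]
      calc (e * b * e) * (u * (e * a * e))
          = (e * (e * b * e)) * (u * (e * a * e)) := by simp only [← mul_assoc, he]
        _ = ((ip * (e * a * e)) * (e * b * e)) * (u * (e * a * e)) := by rw [hipp]
        _ = ip * ((e * a * e) * ((e * b * e) * (u * (e * a * e)))) := by simp only [mul_assoc]
        _ = ip * (e * a * e) := by rw [h1]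
        _ = e := hipp
    have hzuz : z * (u * z) = z := by
      calc z * (u * z) = (a * e * b) * (u * (a * e * b)) := by rw [hz]
        _ = (a * e * b) * ((e * (u * e)) * (a * e * b)) := by rw [hue, heu]
        _ = a * ((e * b * e) * (u * (e * a * e)) * b) := by simp only [mul_assoc]
        _ = a * (e * b) := by rw [hqup]
        _ = z := by rw [hz]; simp only [mul_assoc]
    have huze : u * (z * e) = e := by
      calc u * (z * e) = (u * e) * (z * e) := by rw [hue]
        _ = u * (e * z * e) := by simp only [mul_assoc]
        _ = e := hug
    have hezu : (e * z) * u = e := by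
      calc (e * z) * u = (e * z) * (e * u) := by rw [heu]
        _ = (e * z * e) * u := by simp only [mul_assoc]
        _ = e := hgu
    refine ⟨z * e * u, ⟨⟨z * e * u, ?_⟩, ?_⟩, e * z * e, ⟨z, rfl⟩,
      u * (e * z), ⟨⟨u * (e * z), ?_⟩, ?_⟩, ?_⟩
    · conv_rhs => rw [mul_assoc, hue]
    · calc (z * e * u) * (z * e * u) = (z * e) * ((u * (z * e)) * u) := by simp only [mul_assoc]
        _ = (z * e) * (e * u) := by rw [huze]
        _ = z * e * u := by rw [heu]
    · conv_rhs => rw [← mul_assoc, heu]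
    · calc (u * (e * z)) * (u * (e * z)) = u * (((e * z) * u) * (e * z)) := by
            simp only [mul_assoc]
        _ = u * (e * (e * z)) := by rw [hezu]
        _ = u * (e * z) := by rw [hee]
    · have : (z * e * u) * (e * z * e) * (u * (e * z)) = z := by
        calc (z * e * u) * (e * z * e) * (u * (e * z))
            = ((z * e) * (u * (e * z * e))) * (u * (e * z)) := by simp only [mul_assoc]
          _ = ((z * e) * e) * (u * (e * z)) := by rw [hug]
          _ = (z * e) * (u * (e * z)) := by simp only [mul_assoc]; rw [hee]
          _ = z * ((e * u) * (e * z)) := by simp only [mul_assoc]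
          _ = z * (u * (e * z)) := by rw [heu]
          _ = z * ((u * e) * z) := by simp only [mul_assoc]
          _ = z * (u * z) := by rw [hue]
          _ = z := hzuz
      exact this.symm
  · -- Part 2: the explicit inverse formulas
    intro x hx g hg y hy
    obtain ⟨⟨x', hx'⟩, hxx⟩ := hx
    obtain ⟨g', hg'⟩ := id hg
    obtain ⟨⟨y', hy'⟩, hyy⟩ := hy
    have hxe : x * e = x := by rw [hx']; simp only [mul_assoc, he]
    have hey : e * y = y := by rw [hy']; simp only [← mul_assoc, he]
    have heg : e * g = g := by rw [hg']; simp only [← mul_assoc, he]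
    have hge : g * e = g := by rw [hg']; simp only [mul_assoc, he]
    have hex : e * x = e := by
      apply hprim
      · calc (e * x) * (e * x) = e * ((x * e) * x) := by simp only [mul_assoc]
          _ = e * (x * x) := by rw [hxe]
          _ = e * x := by rw [hxx]
      · rw [← mul_assoc, he]
      · rw [mul_assoc, hxe]
    have hye : y * e = e := by
      apply hprim
      · calc (y * e) * (y * e) = y * ((e * y) * e) := by simp only [mul_assoc]
          _ = y * (y * e) := by rw [hey]
          _ = (y * y) * e := by simp only [mul_assoc]
          _ = y * e := by rw [hyy]
      · rw [← mul_assoc, hey]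
      · rw [mul_assoc, he]
    have key : e * (x * g * y) * e = g := by
      calc e * (x * g * y) * e = (e * x) * (g * (y * e)) := by simp only [mul_assoc]
        _ = (e * x) * (g * e) := by rw [hye]
        _ = e * g := by rw [hex, hge]
        _ = g := heg
    obtain ⟨⟨w, hw⟩, hgu, hug⟩ := hinv g hg
    have heu : e * inv g = inv g := by rw [hw]; simp only [← mul_assoc, he]
    refine ⟨?_, key.symm, ?_⟩
    · rw [key]
      have h : (x * g * y) * e * inv g = x := by
        calc (x * g * y) * e * inv g = (x * g) * ((y * e) * inv g) := by simp only [mul_assoc]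
          _ = (x * g) * (e * inv g) := by rw [hye]
          _ = (x * g) * inv g := by rw [heu]
          _ = x * (g * inv g) := by simp only [mul_assoc]
          _ = x * e := by rw [hgu]
          _ = x := hxe
      exact h.symm
    · rw [key]
      have h : inv g * (e * (x * g * y)) = y := by
        calc inv g * (e * (x * g * y)) = inv g * ((e * x) * (g * y)) := by simp only [mul_assoc]
          _ = inv g * (e * (g * y)) := by rw [hex]
          _ = (inv g * (e * g)) * y := by simp only [mul_assoc]
          _ = (inv g * g) * y := by rw [heg]
          _ = e * y := by rw [hug]
          _ = y := hey
      exact h.symm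
end

section
/- In a completely simple semigroup, every idempotent is primitive. -/
private lemma mulrw {S : Type*} [Semigroup S] {a b c : S} (h : a * b = c) (t : S) :
    a * (b * t) = c * t := by rw [← mul_assoc, h]

/-- In a completely simple semigroup every idempotent is primitive. -/
theorem stmt10 {S : Type*} [Semigroup S]
    (hsimple : ∀ I : Set S, IsIdeal I → I = Set.univ)
    (e : S) (he : e * e = e)
    (hprim : ∀ x : S, x * x = x → e * x = x → x * e = x → x = e) :
    ∀ f : S, f * f = f →
      ∀ x : S, x * x = x → f * x = x → x * f = x → x = f := by
  intro f hf x hx hfx hxf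
  -- Step 1: simplicity gives c, d with c * e * d = f
  obtain ⟨c, d, hcd⟩ : ∃ c d : S, c * e * d = f := by
    have hI : IsIdeal {z : S | ∃ s t : S, s * e * t = z} := by
      refine ⟨⟨e, e, e, by rw [he, he]⟩, ?_⟩
      rintro s i ⟨u, v, rfl⟩
      exact ⟨⟨s * u, v, by simp [mul_assoc]⟩, ⟨u, v * s, by simp [mul_assoc]⟩⟩
    have : f ∈ ({z : S | ∃ s t : S, s * e * t = z} : Set S) := by
      rw [hsimple _ hI]; trivial
    exact this
  set p : S := e * d * f with hp
  set q : S := f * c * e with hq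
  -- assoc'd rewrite rules
  have hcd' : ∀ t : S, c * (e * (d * t)) = f * t := fun t => by
    simp only [← mul_assoc]; rw [hcd]
  have hcd'' : c * (e * d) = f := by rw [← mul_assoc, hcd]
  have he' := mulrw he
  have hf' := mulrw hf
  have hx' := mulrw hx
  have hfx' := mulrw hfx
  have hxf' := mulrw hxf
  -- Step 2: q * p = f
  have hqp : q * p = f := by
    rw [hp, hq]
    simp only [mul_assoc, he', hcd', hf', hf]
  -- Step 3: p * q = e, via primitivity of e
  have hpq : p * q = e := by
    apply hprim
    · rw [hp, hq]
      simp only [mul_assoc, he', hcd', hcd'', hf', hf, he]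
    · rw [hp]
      simp only [mul_assoc, he']
    · rw [hq]
      simp only [mul_assoc, he]
  have hqp' := mulrw hqp
  have hpq' := mulrw hpq
  -- Step 4: z := p * (x * q) is an idempotent under e, hence equals e
  have hz : p * (x * q) = e := by
    apply hprim
    · simp only [mul_assoc, hqp', hqp, hxf', hxf, hfx', hfx, hx', hx]
    · rw [hp]
      simp only [mul_assoc, he']
    · simp only [mul_assoc]
      rw [hq]
      simp only [mul_assoc, he]
  -- Step 5: conclude x = f
  calc x = q * (p * (x * q) * p) := by
        simp only [mul_assoc, hqp', hqp, hxf', hxf, hfx', hfx]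
    _ = q * (e * p) := by rw [hz]
    _ = f := by rw [hp, hq]; simp only [mul_assoc, he', hcd', hf', hf]
end

section
/- If a semigroup S contains a minimal left ideal A and a minimal right ideal B, then BA is a group, and the identity of BA is a primitive idempotent of S. -/
/-- `I` is a right ideal of the semigroup `S`. -/
def IsRightIdeal {S : Type*} [Semigroup S] (I : Set S) : Prop :=
  I.Nonempty ∧ ∀ s : S, ∀ i ∈ I, i * s ∈ I

/-- If a semigroup `S` contains a minimal left ideal `A` and a
minimal right ideal `B`, then `BA` is a group whose identity is a primitive
idempotent of `S`. -/
theorem stmt12 {S : Type*} [Semigroup S] (A B : Set S)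
    (hA : IsLeftIdeal A) (hAmin : ∀ I : Set S, IsLeftIdeal I → I ⊆ A → I = A)
    (hB : IsRightIdeal B) (hBmin : ∀ I : Set S, IsRightIdeal I → I ⊆ B → I = B) :
    (∀ x ∈ {z : S | ∃ b ∈ B, ∃ a ∈ A, z = b * a},
     ∀ y ∈ {z : S | ∃ b ∈ B, ∃ a ∈ A, z = b * a},
        x * y ∈ {z : S | ∃ b ∈ B, ∃ a ∈ A, z = b * a}) ∧
    ∃ e ∈ {z : S | ∃ b ∈ B, ∃ a ∈ A, z = b * a},
      (∀ x ∈ {z : S | ∃ b ∈ B, ∃ a ∈ A, z = b * a}, e * x = x ∧ x * e = x) ∧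
      (∀ x ∈ {z : S | ∃ b ∈ B, ∃ a ∈ A, z = b * a},
        ∃ y ∈ {z : S | ∃ b ∈ B, ∃ a ∈ A, z = b * a}, x * y = e ∧ y * x = e) ∧
      e * e = e ∧
      (∀ x : S, x * x = x → e * x = x → x * e = x → x = e) := by
  obtain ⟨⟨a0, ha0⟩, hAleft⟩ := hA
  obtain ⟨⟨b0, hb0⟩, hBright⟩ := hB
  set G : Set S := {z : S | ∃ b ∈ B, ∃ a ∈ A, z = b * a} with hGdef
  have hGA : ∀ x ∈ G, x ∈ A := by
    rintro x ⟨b, hb, a, ha, rfl⟩; exact hAleft b a ha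
  have hGB : ∀ x ∈ G, x ∈ B := by
    rintro x ⟨b, hb, a, ha, rfl⟩; exact hBright a b hb
  have hGne : (b0 * a0) ∈ G := ⟨b0, hb0, a0, ha0, rfl⟩
  have hclosed : ∀ x ∈ G, ∀ y ∈ G, x * y ∈ G := by
    rintro x ⟨b, hb, a, ha, rfl⟩ y ⟨b', hb', a', ha', rfl⟩
    exact ⟨b, hb, a * b' * a', hAleft (a * b') a' ha', by simp [mul_assoc]⟩
  -- for g ∈ B, gB = B, so every element of B is g * b'
  have hgB : ∀ g ∈ B, ∀ b ∈ B, ∃ b' ∈ B, g * b' = b := by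
    intro g hg b hb
    have hI : IsRightIdeal {z : S | ∃ b' ∈ B, z = g * b'} := by
      refine ⟨⟨g * b0, b0, hb0, rfl⟩, ?_⟩
      rintro s z ⟨b', hb', rfl⟩
      exact ⟨b' * s, hBright s b' hb', mul_assoc g b' s⟩
    have hsub : {z : S | ∃ b' ∈ B, z = g * b'} ⊆ B := by
      rintro z ⟨b', hb', rfl⟩; exact hBright b' g hg
    have heq := hBmin _ hI hsub
    have hbmem : b ∈ {z : S | ∃ b' ∈ B, z = g * b'} := heq.ge hb
    obtain ⟨b', hb', h⟩ := hbmem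
    exact ⟨b', hb', h.symm⟩
  -- for g ∈ A, Ag = A, so every element of A is a' * g
  have hAg : ∀ g ∈ A, ∀ a ∈ A, ∃ a' ∈ A, a' * g = a := by
    intro g hg a ha
    have hI : IsLeftIdeal {z : S | ∃ a' ∈ A, z = a' * g} := by
      refine ⟨⟨a0 * g, a0, ha0, rfl⟩, ?_⟩
      rintro s z ⟨a', ha', rfl⟩
      exact ⟨s * a', hAleft s a' ha', (mul_assoc s a' g).symm⟩
    have hsub : {z : S | ∃ a' ∈ A, z = a' * g} ⊆ A := by
      rintro z ⟨a', ha', rfl⟩; exact hAleft a' g hg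
    have heq := hAmin _ hI hsub
    have hamem : a ∈ {z : S | ∃ a' ∈ A, z = a' * g} := heq.ge ha
    obtain ⟨a', ha', h⟩ := hamem
    exact ⟨a', ha', h.symm⟩
  have hsolveR : ∀ g ∈ G, ∀ h ∈ G, ∃ k ∈ G, g * k = h := by
    intro g hg h hh
    obtain ⟨b, hb, a, ha, rfl⟩ := hh
    obtain ⟨b', hb', hgb⟩ := hgB g (hGB g hg) b hb
    exact ⟨b' * a, ⟨b', hb', a, ha, rfl⟩, by rw [← mul_assoc, hgb]⟩
  have hsolveL : ∀ g ∈ G, ∀ h ∈ G, ∃ k ∈ G, k * g = h := by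
    intro g hg h hh
    obtain ⟨b, hb, a, ha, rfl⟩ := hh
    obtain ⟨a', ha', hag⟩ := hAg g (hGA g hg) a ha
    exact ⟨b * a', ⟨b, hb, a', ha', rfl⟩, by rw [mul_assoc, hag]⟩
  -- identity element
  obtain ⟨e, heG, hge⟩ := hsolveR _ hGne _ hGne
  have hre : ∀ x ∈ G, x * e = x := by
    intro x hx
    obtain ⟨k, hk, rfl⟩ := hsolveL _ hGne x hx
    rw [mul_assoc, hge]
  obtain ⟨e', he'G, he'g⟩ := hsolveL _ hGne _ hGne
  have hle' : ∀ x ∈ G, e' * x = x := by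
    intro x hx
    obtain ⟨k, hk, rfl⟩ := hsolveR _ hGne x hx
    rw [← mul_assoc, he'g]
  have he'e : e' = e := (hre e' he'G).symm.trans (hle' e heG)
  have hle : ∀ x ∈ G, e * x = x := he'e ▸ hle'
  have hee : e * e = e := hre e heG
  refine ⟨hclosed, e, heG, fun x hx => ⟨hle x hx, hre x hx⟩, ?_, hee, ?_⟩
  · -- inverses
    intro x hx
    obtain ⟨y, hy, hxy⟩ := hsolveR x hx e heG
    obtain ⟨y', hy', hy'x⟩ := hsolveL x hx e heG
    have hyy : y' = y := by
      calc y' = y' * e := (hre y' hy').symm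
        _ = y' * (x * y) := by rw [hxy]
        _ = (y' * x) * y := (mul_assoc y' x y).symm
        _ = e * y := by rw [hy'x]
        _ = y := hle y hy
    exact ⟨y, hy, hxy, hyy ▸ hy'x⟩
  · -- primitivity
    intro x hxx hex hxe
    have hxA : x ∈ A := hxe ▸ hAleft x e (hGA e heG)
    have hxB : x ∈ B := hex ▸ hBright x e (hGB e heG)
    have hxG : x ∈ G := ⟨x, hxB, x, hxA, hxx.symm⟩
    obtain ⟨y, hy, hyx⟩ := hsolveL x hxG e heG
    calc x = e * x := hex.symm
      _ = (y * x) * x := by rw [hyx]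
      _ = y * (x * x) := mul_assoc y x x
      _ = y * x := by rw [hxx]
      _ = e := hyx
end

section
/- If a semigroup S contains a minimal left ideal, then the union K of all minimal left ideals of S is the unique minimal two-sided ideal (kernel) of S, and K = SzS for every z ∈ K. -/
/-- A minimal left ideal. -/
def IsMinLeftIdeal {S : Type*} [Semigroup S] (A : Set S) : Prop :=
  IsLeftIdeal A ∧ ∀ I : Set S, IsLeftIdeal I → I ⊆ A → I = A

/-- If a semigroup `S` contains a minimal left ideal, then the union
`K` of all minimal left ideals of `S` is the unique minimal two-sided ideal
(kernel) of `S`, and `K = S z S` for every `z ∈ K`. -/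
theorem stmt13 {S : Type*} [Semigroup S]
    (hexists : ∃ A : Set S, IsMinLeftIdeal A)
    (K : Set S) (hK : K = {x : S | ∃ A : Set S, IsMinLeftIdeal A ∧ x ∈ A}) :
    IsIdeal K ∧
    (∀ I : Set S, IsIdeal I → I ⊆ K → I = K) ∧
    (∀ K' : Set S,
      (IsIdeal K' ∧ ∀ I : Set S, IsIdeal I → I ⊆ K' → I = K') → K' = K) ∧
    (∀ z ∈ K, K = {w : S | ∃ x y : S, w = x * z * y}) := by
  -- A·s is a minimal left ideal whenever A is
  have hmul : ∀ (A : Set S), IsMinLeftIdeal A → ∀ s : S,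
      IsMinLeftIdeal {y : S | ∃ a ∈ A, y = a * s} := by
    intro A ⟨⟨⟨a0, ha0⟩, hAl⟩, hAmin⟩ s
    constructor
    · constructor
      · exact ⟨a0 * s, a0, ha0, rfl⟩
      · rintro t y ⟨a, ha, rfl⟩
        exact ⟨t * a, hAl t a ha, (mul_assoc t a s).symm⟩
    · intro I ⟨⟨i0, hi0⟩, hIl⟩ hIsub
      have hJ : {a ∈ A | a * s ∈ I} = A := by
        apply hAmin
        · constructor
          · obtain ⟨a, ha, rfl⟩ := hIsub hi0
            exact ⟨a, ha, hi0⟩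
          · intro t a ⟨haA, haI⟩
            refine ⟨hAl t a haA, ?_⟩
            rw [mul_assoc]; exact hIl t _ haI
        · exact fun a ha => ha.1
      apply Set.Subset.antisymm hIsub
      rintro y ⟨a, ha, rfl⟩
      have : a ∈ {a ∈ A | a * s ∈ I} := by rw [hJ]; exact ha
      exact this.2
  -- every minimal left ideal is contained in every ideal
  have hsub : ∀ (I : Set S), IsIdeal I → ∀ (A : Set S), IsMinLeftIdeal A → A ⊆ I := by
    intro I ⟨⟨i0, hi0⟩, hI⟩ A ⟨⟨⟨a0, ha0⟩, hAl⟩, hAmin⟩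
    have hAI : A ∩ I = A := by
      apply hAmin
      · constructor
        · exact ⟨i0 * a0, hAl i0 a0 ha0, (hI a0 i0 hi0).2⟩
        · intro t a ⟨haA, haI⟩
          exact ⟨hAl t a haA, (hI t a haI).1⟩
      · exact Set.inter_subset_left
    intro a ha
    have : a ∈ A ∩ I := by rw [hAI]; exact ha
    exact this.2
  obtain ⟨A0, hA0⟩ := hexists
  have hKideal : IsIdeal K := by
    constructor
    · obtain ⟨a0, ha0⟩ := hA0.1.1
      exact ⟨a0, hK ▸ ⟨A0, hA0, ha0⟩⟩
    · intro s i hi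
      rw [hK] at hi ⊢
      obtain ⟨A, hA, hiA⟩ := hi
      constructor
      · exact ⟨A, hA, hA.1.2 s i hiA⟩
      · exact ⟨_, hmul A hA s, i, hiA, rfl⟩
  have hKsub : ∀ I : Set S, IsIdeal I → K ⊆ I := by
    intro I hI x hx
    rw [hK] at hx
    obtain ⟨A, hA, hxA⟩ := hx
    exact hsub I hI A hA hxA
  refine ⟨hKideal, ?_, ?_, ?_⟩
  · intro I hI hIK
    exact Set.Subset.antisymm hIK (hKsub I hI)
  · intro K' ⟨hK'ideal, hK'min⟩
    exact (hK'min K hKideal (hKsub K' hK'ideal)).symm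
  · intro z hz
    have hSzS : IsIdeal {w : S | ∃ x y : S, w = x * z * y} := by
      constructor
      · exact ⟨z * z * z, z, z, rfl⟩
      · rintro s w ⟨x, y, rfl⟩
        constructor
        · exact ⟨s * x, y, by simp [mul_assoc]⟩
        · exact ⟨x, y * s, by simp [mul_assoc]⟩
    have hsubK : {w : S | ∃ x y : S, w = x * z * y} ⊆ K := by
      rintro w ⟨x, y, rfl⟩
      rw [hK] at hz ⊢
      obtain ⟨A, hA, hzA⟩ := hz
      exact ⟨_, hmul A hA y, x * z, hA.1.2 x z hzA, rfl⟩
    exact Set.Subset.antisymm (hKsub _ hSzS) hsubK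
end

section
/- If a group G carries a completely metrizable topology making the multiplication map G × G → G jointly continuous, then inversion g ↦ g⁻¹ is continuous, i.e. G is a topological group. -/
/-!
Given `u → 1`, pass to a subsequence `y` whose tail products `y j * y (j + 1) * ⋯` are
geometrically Cauchy, uniformly in the starting index. By completeness they converge to limits
`S j`, with `S j → 1` and `S 0 = (y 0 ⋯ y (k - 1)) * y k * S (k + 1)`. Hence
`(y k)⁻¹ = S (k + 1) * (S 0)⁻¹ * (y 0 ⋯ y (k - 1)) → 1 * (S 0)⁻¹ * S 0 = 1`, so inversion is
sequentially continuous at `1`, and translating makes it continuous everywhere.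
-/

open Filter Topology

theorem exists_seq_forall_of_exists_next {α : Type*} [Nonempty α] {P : ℕ → (ℕ → α) → α → Prop}
    (hP : ∀ k f g, (∀ i < k, f i = g i) → P k f = P k g) (h : ∀ k f, ∃ a, P k f a) :
    ∃ f : ℕ → α, ∀ k, P k f (f k) := by
  classical
  choose F hF using h
  let f : ℕ → α := Nat.strongRec (motive := fun _ => α) fun k past =>
    F k fun i => if hi : i < k then past i hi else Classical.arbitrary α
  refine ⟨f, fun k => ?_⟩
  let past (i : ℕ) : α := if hi : i < k then f i else Classical.arbitrary α
  have hf : f k = F k past := Nat.strongRec_eq _ k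
  rw [hf, hP k f past fun i hi => by simp [past, hi]]
  exact hF k past

section TailProd

variable {M : Type*} [Monoid M]

def tailProd (y : ℕ → M) (j n : ℕ) : M :=
  ((List.range n).map fun i => y (j + i)).prod

@[simp]
theorem tailProd_zero (y : ℕ → M) (j : ℕ) : tailProd y j 0 = 1 := rfl

theorem tailProd_succ (y : ℕ → M) (j n : ℕ) :
    tailProd y j (n + 1) = tailProd y j n * y (j + n) :=
  List.prod_range_succ _ n

theorem tailProd_add (y : ℕ → M) (j m n : ℕ) :
    tailProd y j (m + n) = tailProd y j m * tailProd y (j + m) n := by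
  simp only [tailProd, List.range_add, List.map_append, List.prod_append, List.map_map,
    Function.comp_def, add_assoc]

theorem tailProd_congr {y z : ℕ → M} {j n : ℕ} (h : ∀ i < n, y (j + i) = z (j + i)) :
    tailProd y j n = tailProd z j n :=
  congrArg List.prod <| List.map_congr_left fun i hi => h i (List.mem_range.1 hi)

theorem eq_tailProd_mul_of_tendsto [TopologicalSpace M] [T2Space M] [ContinuousMul M]
    {y S : ℕ → M} (hS : ∀ j, Tendsto (tailProd y j) atTop (𝓝 (S j))) (j m : ℕ) :
    S j = tailProd y j m * S (j + m) := by
  have hshift : Tendsto (fun n => tailProd y j (m + n)) atTop (𝓝 (S j)) :=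
    (hS j).comp (tendsto_atTop_mono (Nat.le_add_left · m) tendsto_id)
  refine tendsto_nhds_unique hshift ?_
  simpa only [tailProd_add] using (hS (j + m)).const_mul (tailProd y j m)

end TailProd

theorem exists_tendsto_tailProd {M : Type*} [Monoid M] [PseudoMetricSpace M] [CompleteSpace M]
    {y : ℕ → M}
    (hy : ∀ j n, dist (tailProd y j n) (tailProd y j (n + 1)) ≤ (1 / 2 : ℝ) ^ (j + n)) :
    ∃ S : ℕ → M, (∀ j, Tendsto (tailProd y j) atTop (𝓝 (S j))) ∧ Tendsto S atTop (𝓝 1) := by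
  have hy' (j n : ℕ) :
      dist (tailProd y j n) (tailProd y j (n + 1)) ≤ (1 / 2 : ℝ) ^ j * (1 / 2) ^ n :=
    (hy j n).trans_eq (pow_add _ _ _)
  choose S hS using fun j =>
    cauchySeq_tendsto_of_complete (cauchySeq_of_le_geometric _ _ (by norm_num) (hy' j))
  refine ⟨S, hS, ?_⟩
  have hdist (j : ℕ) : dist (S j) 1 ≤ (1 / 2 : ℝ) ^ j / (1 - 1 / 2) := by
    rw [dist_comm]
    simpa using dist_le_of_le_geometric_of_tendsto₀ _ _ (by norm_num) (hy' j) (hS j)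
  refine tendsto_iff_dist_tendsto_zero.2 (squeeze_zero (fun _ => dist_nonneg) hdist ?_)
  simpa using (tendsto_pow_atTop_nhds_zero_of_lt_one (r := (1 / 2 : ℝ))
    (by norm_num) (by norm_num)).div_const (1 - 1 / 2)

theorem tendsto_inv_of_dist_tailProd_le {G : Type*} [Group G] [MetricSpace G] [CompleteSpace G]
    [ContinuousMul G] {y : ℕ → G}
    (hy : ∀ j n, dist (tailProd y j n) (tailProd y j (n + 1)) ≤ (1 / 2 : ℝ) ^ (j + n)) :
    Tendsto (fun k => (y k)⁻¹) atTop (𝓝 1) := by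
  obtain ⟨S, hS, hS1⟩ := exists_tendsto_tailProd hy
  have hinv (k : ℕ) : (y k)⁻¹ = S (k + 1) * (S 0)⁻¹ * tailProd y 0 k := by
    rw [eq_tailProd_mul_of_tendsto hS 0 (k + 1), tailProd_succ, zero_add, zero_add]
    group
  have hlim := ((hS1.comp (tendsto_add_atTop_nat 1)).mul_const (S 0)⁻¹).mul (hS 0)
  simpa [← hinv] using hlim

theorem exists_dist_tailProd_le {M : Type*} [Monoid M] [PseudoMetricSpace M] [ContinuousMul M]
    {u : ℕ → M} (hu : Tendsto u atTop (𝓝 1)) :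
    ∃ φ : ℕ → ℕ, ∀ j n,
      dist (tailProd (u ∘ φ) j n) (tailProd (u ∘ φ) j (n + 1)) ≤ (1 / 2 : ℝ) ^ (j + n) := by
  -- The `k`-th index is chosen so that appending `u (φ k)` moves every tail product ending
  -- just before `k` by at most `2⁻ᵏ`; possible because `c * u n → c` for each of them.
  let P (k : ℕ) (f : ℕ → ℕ) (a : ℕ) : Prop := ∀ j ≤ k,
    dist (tailProd (u ∘ f) j (k - j)) (tailProd (u ∘ f) j (k - j) * u a) ≤ (1 / 2 : ℝ) ^ k
  have hlocal (k : ℕ) (f g : ℕ → ℕ) (hfg : ∀ i < k, f i = g i) : P k f = P k g := by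
    have hprod (j : ℕ) : tailProd (u ∘ f) j (k - j) = tailProd (u ∘ g) j (k - j) :=
      tailProd_congr fun i hi => by simp only [Function.comp_apply, hfg (j + i) (by omega)]
    simp only [P, hprod]
  have hnext (k : ℕ) (f : ℕ → ℕ) : ∃ a, P k f a := by
    suffices ∀ᶠ a in atTop, P k f a from this.exists
    refine (Set.finite_Iic k).eventually_all.2 fun j _ => ?_
    set c := tailProd (u ∘ f) j (k - j)
    have hc : Tendsto (fun n => dist c (c * u n)) atTop (𝓝 0) := by
      have hcont : Continuous fun b => dist c (c * b) :=
        continuous_const.dist (continuous_const_mul c)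
      simpa [Function.comp_def] using (hcont.tendsto 1).comp hu
    exact hc.eventually_le_const (by positivity)
  obtain ⟨φ, hφ⟩ := exists_seq_forall_of_exists_next hlocal hnext
  exact ⟨φ, fun j n => by simpa [tailProd_succ] using hφ (j + n) j (by omega)⟩

theorem IsTopologicalGroup.of_tendsto_inv_one {G : Type*} [Group G] [TopologicalSpace G]
    [ContinuousMul G] (h : Tendsto (fun x : G => x⁻¹) (𝓝 1) (𝓝 1)) : IsTopologicalGroup G where
  continuous_inv := continuous_iff_continuousAt.2 fun a => by
    have hright : Tendsto (fun x => x * a⁻¹) (𝓝 a) (𝓝 1) := by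
      simpa using (continuous_mul_const a⁻¹).tendsto a
    simpa [ContinuousAt] using (h.comp hright).const_mul a⁻¹

/-- Ellis–Żelazko: If a group `G` carries a complete metric topology
making multiplication jointly continuous, then inversion is continuous, i.e. `G` is
a topological group. -/
theorem stmt16 {G : Type*} [Group G] [MetricSpace G] [CompleteSpace G]
    [ContinuousMul G] : IsTopologicalGroup G :=
  .of_tendsto_inv_one <| tendsto_of_subseq_tendsto fun _ hu =>
    (exists_dist_tailProd_le hu).imp fun _ => tendsto_inv_of_dist_tailProd_le
end

section
/- Let S be a Polish semigroup and a ∈ S such that every subsequence of (aⁿ) has a convergent further subsequence. Then the set C of cluster points of (aⁿ) is a compact abelian group under the semigroup multiplication, and if e is its identity then C equals the closure of {e, ae, a²e, …}. -/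
/-!
Write `C` for the set of subsequential limits of `aⁿ`. Limits of products of powers show that `C`
is closed under multiplication, and `C` lies in the closure of the powers, which is commutative
since the powers commute. Given `x = lim a^{n_i}` and `y = lim a^{m_i}`, reindex so that
`m_i - n_i → ∞`; a convergent subsequence of `a^{m_i - n_i}` then tends to some `z ∈ C` with
`x z = y`. A nonempty commutative semigroup in which every such equation is solvable is a group.
Compactness is a diagonal argument in a compatible metric, and `C` is the closure of the orbit
of `e` because `x = x e = lim a^{n_i} e`.
-/

open Filter Topology

/-- The powers `a, a², a³, …` of an element of a semigroup: `pows a n = a^(n+1)`. -/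
def pows {S : Type*} [Semigroup S] (a : S) : ℕ → S
  | 0 => a
  | n + 1 => pows a n * a

open Set TopologicalSpace

section Sequences

variable {X : Type*} [TopologicalSpace X]

def subseqLimits (u : ℕ → X) : Set X :=
  {x | ∃ n : ℕ → ℕ, StrictMono n ∧ Tendsto (fun i => u (n i)) atTop (𝓝 x)}

def HasConvergentSubseqs (u : ℕ → X) : Prop :=
  ∀ n : ℕ → ℕ, StrictMono n → ∃ k : ℕ → ℕ, StrictMono k ∧
    ∃ x : X, Tendsto (fun i => u (n (k i))) atTop (𝓝 x)

variable {u : ℕ → X}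

lemma subseqLimits_subset_closure_range (u : ℕ → X) : subseqLimits u ⊆ closure (range u) :=
  fun _ ⟨_, _, hx⟩ => mem_closure_of_tendsto hx (Eventually.of_forall fun _ => mem_range_self _)

lemma mapClusterPt_of_mem_subseqLimits {x : X} (hx : x ∈ subseqLimits u) :
    MapClusterPt x atTop u :=
  let ⟨_, hn, hnx⟩ := hx
  MapClusterPt.of_comp hn.tendsto_atTop hnx.mapClusterPt

namespace HasConvergentSubseqs

lemma subseqLimits_nonempty (hu : HasConvergentSubseqs u) : (subseqLimits u).Nonempty :=
  let ⟨k, hk, x, hx⟩ := hu id strictMono_id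
  ⟨x, k, hk, hx⟩

lemma exists_tendsto_of_tendsto_atTop (hu : HasConvergentSubseqs u) {p : ℕ → ℕ}
    (hp : Tendsto p atTop atTop) :
    ∃ k : ℕ → ℕ, StrictMono k ∧
      ∃ z ∈ subseqLimits u, Tendsto (fun i => u (p (k i))) atTop (𝓝 z) := by
  obtain ⟨φ, hφ, hpφ⟩ := strictMono_subseq_of_tendsto_atTop hp
  obtain ⟨k, hk, z, hz⟩ := hu (p ∘ φ) hpφ
  exact ⟨φ ∘ k, hφ.comp hk, z, ⟨p ∘ φ ∘ k, hpφ.comp hk, hz⟩, hz⟩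

lemma isCompact_subseqLimits [PseudoMetrizableSpace X] (hu : HasConvergentSubseqs u) :
    IsCompact (subseqLimits u) := by
  let := pseudoMetrizableSpacePseudoMetric X
  refine IsSeqCompact.isCompact fun x hx => ?_
  have hnear : ∀ i, ∃ᶠ n in atTop, dist (u n) (x i) < 1 / ((i : ℝ) + 1) := fun i =>
    (mapClusterPt_of_mem_subseqLimits (hx i)).frequently (Metric.ball_mem_nhds _ (by positivity))
  obtain ⟨φ, hφ, hφx⟩ := extraction_forall_of_frequently hnear
  obtain ⟨k, hk, z, hz⟩ := hu φ hφ
  refine ⟨z, ⟨φ ∘ k, hφ.comp hk, hz⟩, k, hk, hz.congr_dist ?_⟩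
  exact squeeze_zero (fun _ => dist_nonneg) (fun i => (hφx (k i)).le)
    (tendsto_one_div_add_atTop_nhds_zero_nat.comp hk.tendsto_atTop)

end HasConvergentSubseqs

end Sequences

section Powers

variable {S : Type*} [Semigroup S] (a : S)

lemma pows_mul_pows (m : ℕ) : ∀ n, pows a m * pows a n = pows a (m + n + 1)
  | 0 => rfl
  | n + 1 => by rw [pows, ← mul_assoc, pows_mul_pows m n]; rfl

lemma pows_mul_comm (m n : ℕ) : pows a m * pows a n = pows a n * pows a m := by
  rw [pows_mul_pows, pows_mul_pows, Nat.add_comm m n]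

variable [TopologicalSpace S] [ContinuousMul S] {a} {x y : S}

lemma mul_mem_subseqLimits_pows_of_tendsto {m n : ℕ → ℕ} (hm : Monotone m) (hn : StrictMono n)
    (hx : Tendsto (fun i => pows a (m i)) atTop (𝓝 x))
    (hy : Tendsto (fun i => pows a (n i)) atTop (𝓝 y)) :
    x * y ∈ subseqLimits (pows a) := by
  refine ⟨fun i => m i + n i + 1, fun i j hij => ?_, ?_⟩
  · have := hm hij.le; have := hn hij; dsimp only; omega
  · simpa only [pows_mul_pows] using hx.mul hy

lemma mul_mem_subseqLimits_pows (hx : x ∈ subseqLimits (pows a))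
    (hy : y ∈ subseqLimits (pows a)) : x * y ∈ subseqLimits (pows a) :=
  let ⟨_, hm, hmx⟩ := hx
  let ⟨_, hn, hny⟩ := hy
  mul_mem_subseqLimits_pows_of_tendsto hm.monotone hn hmx hny

lemma pows_mul_mem_subseqLimits_pows (k : ℕ) (hx : x ∈ subseqLimits (pows a)) :
    pows a k * x ∈ subseqLimits (pows a) :=
  let ⟨_, hn, hnx⟩ := hx
  mul_mem_subseqLimits_pows_of_tendsto monotone_const hn tendsto_const_nhds hnx

variable [T2Space S]

lemma mul_comm_of_mem_closure_range_pows (hx : x ∈ closure (range (pows a)))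
    (hy : y ∈ closure (range (pows a))) : x * y = y * x := by
  refine eqOn_closure₂' (f := (· * ·)) (g := fun x y => y * x) ?_ (fun _ => by fun_prop)
    (fun _ => by fun_prop) (fun _ => by fun_prop) (fun _ => by fun_prop) x hx y hy
  rintro _ ⟨m, rfl⟩ _ ⟨n, rfl⟩
  exact pows_mul_comm a m n

lemma mul_comm_of_mem_subseqLimits_pows (hx : x ∈ subseqLimits (pows a))
    (hy : y ∈ subseqLimits (pows a)) : x * y = y * x :=
  mul_comm_of_mem_closure_range_pows (subseqLimits_subset_closure_range _ hx)
    (subseqLimits_subset_closure_range _ hy)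

lemma exists_mul_eq_of_mem_subseqLimits_pows (hu : HasConvergentSubseqs (pows a))
    (hx : x ∈ subseqLimits (pows a)) (hy : y ∈ subseqLimits (pows a)) :
    ∃ z ∈ subseqLimits (pows a), x * z = y := by
  obtain ⟨n, hn, hnx⟩ := hx
  obtain ⟨m, hm, hmy⟩ := hy
  set q : ℕ → ℕ := fun i => m (n i + i + 1)
  set p : ℕ → ℕ := fun i => q i - n i - 1
  have hq_le : ∀ i, n i + i + 1 ≤ q i := fun i => hm.le_apply
  have hnpq : ∀ i, pows a (n i) * pows a (p i) = pows a (q i) := fun i => by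
    rw [pows_mul_pows]; have := hq_le i; congr 1; dsimp only [p]; omega
  have hp : Tendsto p atTop atTop :=
    tendsto_atTop_mono (fun i => by have := hq_le i; dsimp only [id, p]; omega) tendsto_id
  obtain ⟨k, hk, z, hz, hpz⟩ := hu.exists_tendsto_of_tendsto_atTop hp
  refine ⟨z, hz, tendsto_nhds_unique ((hnx.comp hk.tendsto_atTop).mul hpz) ?_⟩
  have hqk : Tendsto (fun i => n (k i) + k i + 1) atTop atTop :=
    tendsto_atTop_mono (fun i => by omega) hk.tendsto_atTop
  simpa only [Function.comp_def, hnpq] using hmy.comp hqk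

end Powers

lemma exists_identity_and_inverses_of_forall_exists_mul_eq {S : Type*} [Semigroup S] {C : Set S}
    (hne : C.Nonempty)
    (hcomm : ∀ x ∈ C, ∀ y ∈ C, x * y = y * x)
    (hdiv : ∀ x ∈ C, ∀ y ∈ C, ∃ z ∈ C, x * z = y) :
    ∃ e ∈ C, (∀ x ∈ C, e * x = x ∧ x * e = x) ∧ ∀ x ∈ C, ∃ y ∈ C, x * y = e ∧ y * x = e := by
  obtain ⟨x₀, hx₀⟩ := hne
  obtain ⟨e, he, hx₀e⟩ := hdiv x₀ hx₀ x₀ hx₀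
  have he_mul : ∀ x ∈ C, e * x = x := fun x hx => by
    obtain ⟨z, -, rfl⟩ := hdiv x₀ hx₀ x hx
    rw [← mul_assoc, hcomm e he x₀ hx₀, hx₀e]
  refine ⟨e, he, fun x hx => ⟨he_mul x hx, hcomm x hx e he ▸ he_mul x hx⟩, fun x hx => ?_⟩
  obtain ⟨y, hy, hxy⟩ := hdiv x hx e he
  exact ⟨y, hy, hxy, hcomm y hy x hx ▸ hxy⟩

lemma subseqLimits_pows_eq_closure {S : Type*} [Semigroup S] [TopologicalSpace S]
    [ContinuousMul S] {a e : S} (hclosed : IsClosed (subseqLimits (pows a)))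
    (he : e ∈ subseqLimits (pows a)) (hid : ∀ x ∈ subseqLimits (pows a), x * e = x) :
    subseqLimits (pows a) = closure ({e} ∪ {x : S | ∃ n : ℕ, x = pows a n * e}) := by
  refine Subset.antisymm (fun x hx => ?_) (closure_minimal ?_ hclosed)
  · have hxe := hid x hx
    obtain ⟨n, -, hnx⟩ := hx
    refine mem_closure_of_tendsto (hxe ▸ hnx.mul_const e) (Eventually.of_forall fun i => ?_)
    exact Or.inr ⟨n i, rfl⟩
  · rintro x (rfl | ⟨n, rfl⟩)
    exacts [he, pows_mul_mem_subseqLimits_pows n he]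

/-- Let `S` be a Polish semigroup and `a ∈ S` such that every
subsequence of `(aⁿ)` has a convergent further subsequence. Then the set `C` of
cluster points of `(aⁿ)` is a compact abelian group under the semigroup
multiplication, and if `e` is its identity then `C` is the closure of
`{e, ae, a²e, …}`. -/
theorem stmt18 {S : Type*} [Semigroup S] [TopologicalSpace S] [PolishSpace S]
    [ContinuousMul S] (a : S)
    (hsub : ∀ n : ℕ → ℕ, StrictMono n → ∃ k : ℕ → ℕ, StrictMono k ∧
      ∃ x : S, Tendsto (fun i => pows a (n (k i))) atTop (𝓝 x))
    (C : Set S)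
    (hC : C = {x : S | ∃ n : ℕ → ℕ, StrictMono n ∧
      Tendsto (fun i => pows a (n i)) atTop (𝓝 x)}) :
    IsCompact C ∧
    (∀ x ∈ C, ∀ y ∈ C, x * y ∈ C ∧ x * y = y * x) ∧
    (∃ e ∈ C, (∀ x ∈ C, e * x = x ∧ x * e = x) ∧
      ∀ x ∈ C, ∃ y ∈ C, x * y = e ∧ y * x = e) ∧
    (∀ e ∈ C, (∀ x ∈ C, e * x = x ∧ x * e = x) →
      C = closure ({e} ∪ {x : S | ∃ n : ℕ, x = pows a n * e})) := by
  change C = subseqLimits (pows a) at hC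
  subst hC
  have hcompact : IsCompact (subseqLimits (pows a)) :=
    HasConvergentSubseqs.isCompact_subseqLimits hsub
  refine ⟨hcompact, fun x hx y hy =>
      ⟨mul_mem_subseqLimits_pows hx hy, mul_comm_of_mem_subseqLimits_pows hx hy⟩,
    exists_identity_and_inverses_of_forall_exists_mul_eq
      (HasConvergentSubseqs.subseqLimits_nonempty hsub)
      (fun x hx y hy => mul_comm_of_mem_subseqLimits_pows hx hy)
      (fun x hx y hy => exists_mul_eq_of_mem_subseqLimits_pows hsub hx hy),
    fun e he hid => subseqLimits_pows_eq_closure hcompact.isClosed he fun x hx => (hid x hx).2⟩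
end
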